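/- Let n, m, r be natural numbers with m < n and r + n + 1 ≤ 2m. Let γ, δ be partial functions from Fin n to Fin n with r + 1 ≤ rank(γ) ≤ m and r + 1 ≤ rank(δ) ≤ m, and rank(γ·δ) = r. Then there exist partial functions α, β from Fin n to Fin n, each of rank r + 1, such that α·β = γ·δ and, in the free semigroup on the alphabet X = {μ ∈ PT_n : r + 1 ≤ rank(μ) ≤ m}, the pair (x_γ·x_δ, x_α·x_β) lies in the congruence generated by R = {(x_μ·x_ν, x_{μν}) : r + 1 ≤ rank(μ), rank(ν), rank(μ·ν) ≤ m}. -/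

import Mathlib

/-!
Counting preimages gives `rank γ + rank δ ≤ n + rank (γδ)`, so `r + n + 1 ≤ 2m` forces one of
the two factors to have rank below `m`, and a factor of rank below `m` leaves room for a third
letter that changes the other factor without changing the product.

If `rank δ < m`: since `rank (γδ) < rank γ`, some `w ∈ ran γ` can be dropped from `ran γ` without
shrinking its `δ`-image. With `s` a section of `δ` on `ran δ` avoiding `w`, the map `σ = s ∘ δ`
redefined to fix `w` has `σδ = δ`, `rank σ ≤ rank δ + 1 ≤ m` and `rank (γσ) = r + 1`, so
`x_γ x_δ ~ x_γ x_σ x_δ ~ x_{γσ} x_δ`.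

If `rank γ < m`: some `c ∉ ran γ` has a `δ`-image outside `ran (γδ)`. The partial identity `ι`
on `ran γ ∪ {c}` has `γι = γ`, `rank ι = rank γ + 1 ≤ m` and `rank (ιδ) = r + 1`, so
`x_γ x_δ ~ x_γ x_ι x_δ ~ x_γ x_{ιδ}`.

Applying both moves, the one using the factor of small rank first, brings both factors down to
rank `r + 1`.
-/

/-- The partial transformation monoid on `Fin n`: all partial functions from `Fin n`
to `Fin n`, with `α * β` meaning "first apply `α`, then `β`". -/
def PTn (n : ℕ) : Type := PFun (Fin n) (Fin n)

/-- The underlying partial function of a partial transformation. -/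
def PTn.toPFun {n : ℕ} (f : PTn n) : PFun (Fin n) (Fin n) := f

instance (n : ℕ) : Semigroup (PTn n) where
  mul f g := (g.toPFun.comp f.toPFun : PFun (Fin n) (Fin n))
  mul_assoc _ _ _ := (PFun.comp_assoc _ _ _).symm

/-- The rank of a partial transformation: the cardinality of its image. -/
noncomputable def ptrank {n : ℕ} (f : PTn n) : ℕ := Set.ncard f.toPFun.ran

theorem ptrank_mul_le {n : ℕ} (f g : PTn n) : ptrank (f * g) ≤ ptrank g := by
  apply Set.ncard_le_ncard _ (Set.toFinite _)
  intro y hy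
  obtain ⟨x, hx⟩ := hy
  rw [show (f * g).toPFun x = (f.toPFun x).bind g.toPFun from rfl] at hx
  obtain ⟨z, _, hz⟩ := Part.mem_bind_iff.1 hx
  exact ⟨z, hz⟩

/-- The ideal `I_m` of the partial transformation monoid: all partial maps of rank at
most `m`, as a subsemigroup. -/
def PTideal (n m : ℕ) : Subsemigroup (PTn n) where
  carrier := {a | ptrank a ≤ m}
  mul_mem' := fun {a b} _ hb => le_trans (ptrank_mul_le a b) hb

/-- The alphabet `X_{i,m}`: partial transformations `a` with `i ≤ rank a ≤ m`. -/
abbrev PTX (n m i : ℕ) : Type := {a : PTn n // i ≤ ptrank a ∧ ptrank a ≤ m}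

/-- The relations `R_{i,m}` of the restricted Cayley table presentation. -/
def PTRel (n m i : ℕ) : FreeSemigroup (PTX n m i) → FreeSemigroup (PTX n m i) → Prop :=
  fun u v =>
    ∃ (a b : PTn n) (ha : i ≤ ptrank a ∧ ptrank a ≤ m)
      (hb : i ≤ ptrank b ∧ ptrank b ≤ m) (hab : i ≤ ptrank (a * b) ∧ ptrank (a * b) ≤ m),
      u = FreeSemigroup.of (⟨a, ha⟩ : PTX n m i) * FreeSemigroup.of (⟨b, hb⟩ : PTX n m i) ∧
      v = FreeSemigroup.of (⟨a * b, hab⟩ : PTX n m i)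

namespace PFun

variable {α β γ : Type*}

theorem ran_comp (f : β →. γ) (g : α →. β) : (f.comp g).ran = f.image g.ran := by
  ext z
  refine ⟨fun ⟨x, hz⟩ => ?_, fun ⟨y, ⟨x, hy⟩, hz⟩ => ⟨x, Part.mem_bind_iff.2 ⟨y, hy, hz⟩⟩⟩
  obtain ⟨y, hy, hz⟩ := Part.mem_bind_iff.1 hz
  exact ⟨y, ⟨x, hy⟩, hz⟩

theorem ran_eq_image_univ (f : α →. β) : f.ran = f.image Set.univ := by
  ext
  simp [ran, mem_image]

theorem ran_res (f : α → β) (s : Set α) : (res f s).ran = f '' s := by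
  ext
  simp [ran, mem_res]

theorem image_finite (f : α →. β) {s : Set α} (hs : s.Finite := by toFinite_tac) :
    (f.image s).Finite :=
  have : Finite ↥(s ∩ f.Dom) := (hs.subset Set.inter_subset_left).to_subtype
  (Set.finite_range fun x : ↥(s ∩ f.Dom) => f.fn x x.2.2).subset fun _ ⟨x, hx, hy⟩ =>
    ⟨⟨x, hx, Part.dom_iff_mem.2 ⟨_, hy⟩⟩, Part.get_eq_of_mem hy _⟩

theorem finite_ran [Finite α] (f : α →. β) : f.ran.Finite :=
  ran_eq_image_univ f ▸ image_finite f

theorem ncard_image_le (f : α →. β) {s : Set α} (hs : s.Finite := by toFinite_tac) :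
    (f.image s).ncard ≤ s.ncard := by
  obtain rfl | ⟨a, -⟩ := s.eq_empty_or_nonempty
  · simp [image_def]
  have : Nonempty α := ⟨a⟩
  choose! x hxs hx using fun y (hy : y ∈ f.image s) => hy
  exact Set.ncard_le_ncard_of_injOn x hxs
    (fun y hy y' hy' h => Part.mem_unique (hx y hy) (h ▸ hx y' hy')) hs

theorem ncard_ran_add_ncard_ran_le [Finite β] (f : α →. β) (g : β →. γ) :
    f.ran.ncard + g.ran.ncard ≤ Nat.card β + (g.comp f).ran.ncard := by
  have hsplit : g.ran = (g.comp f).ran ∪ g.image f.ranᶜ := by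
    rw [ran_comp, ran_eq_image_univ, ← image_union, Set.union_compl_self]
  calc f.ran.ncard + g.ran.ncard
      ≤ f.ran.ncard + ((g.comp f).ran.ncard + f.ranᶜ.ncard) := by
        rw [hsplit]
        gcongr
        exact (Set.ncard_union_le _ _).trans (by gcongr; exact ncard_image_le _)
    _ = Nat.card β + (g.comp f).ran.ncard := by
        rw [← Set.ncard_add_ncard_compl f.ran]
        ring

theorem exists_fix_ran_ncard_ran_comp_succ [Finite β] (g : α →. β) (h : β →. γ)
    (hlt : (h.comp g).ran.ncard < h.ran.ncard) :
    ∃ ι : β →. β, ι.comp g = g ∧ ι.ran.ncard = g.ran.ncard + 1 ∧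
      (h.comp ι).ran.ncard = (h.comp g).ran.ncard + 1 := by
  obtain ⟨t, ⟨c, hc⟩, ht⟩ := Set.exists_mem_notMem_of_ncard_lt_ncard hlt
    (by rw [ran_comp]; exact image_finite _)
  have hcg : c ∉ g.ran := fun hcg => ht (ran_comp h g ▸ ⟨c, hcg, hc⟩)
  refine ⟨res id (insert c g.ran), ?_, ?_, ?_⟩
  · refine PFun.ext fun x y => ?_
    refine ⟨fun hy => ?_, fun hy => Part.mem_bind_iff.2 ⟨y, hy, (mem_res _ _ _ _).2
      ⟨Set.mem_insert_of_mem _ ⟨x, hy⟩, rfl⟩⟩⟩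
    obtain ⟨z, hz, -, rfl⟩ := Part.mem_bind_iff.1 hy
    exact hz
  · rw [ran_res, Set.image_id, Set.ncard_insert_of_notMem hcg]
  · have himage : h.image {c} = {t} := by
      ext y
      simp only [mem_image, Set.mem_singleton_iff, exists_eq_left]
      exact ⟨fun hy => Part.mem_unique hy hc, fun hy => hy ▸ hc⟩
    rw [ran_comp, ran_res, Set.image_id, Set.insert_eq, image_union, himage, ← ran_comp,
      ← Set.insert_eq, Set.ncard_insert_of_notMem ht (by rw [ran_comp]; exact image_finite _)]

theorem exists_image_diff_singleton_eq (θ : β →. γ) {s : Set β}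
    (hs : s.Finite := by toFinite_tac)
    (hlt : (θ.image s).ncard < s.ncard) : ∃ w ∈ s, θ.image (s \ {w}) = θ.image s := by
  by_contra! hne
  have hprivate : ∀ w ∈ s, ∃ y ∈ θ w, ∀ u ∈ s, u ≠ w → y ∉ θ u := by
    intro w hw
    obtain ⟨y, ⟨u, hu, hy⟩, hy'⟩ :=
      Set.exists_of_ssubset ((image_mono θ Set.sdiff_subset).ssubset_of_ne (hne w hw))
    obtain rfl : u = w := by_contra fun huw => hy' ⟨u, ⟨hu, huw⟩, hy⟩
    exact ⟨y, hy, fun v hv hvu hyv => hy' ⟨v, ⟨hv, hvu⟩, hyv⟩⟩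
  obtain ⟨w, hw⟩ := Set.nonempty_of_ncard_ne_zero (s := s) (by omega)
  have : Nonempty γ := ⟨(hprivate w hw).choose⟩
  choose! y hy hy' using hprivate
  refine hlt.not_ge (Set.ncard_le_ncard_of_injOn y (fun w hw => ⟨w, hw, hy w hw⟩) ?_
    (image_finite θ hs))
  exact fun w hw w' hw' h => by_contra fun hne => hy' w hw w' hw' (Ne.symm hne) (h ▸ hy w' hw')

def updateMap [DecidableEq β] (θ : β →. γ) (s : γ → β) (w : β) : β →. β :=
  fun x => if x = w then Part.some w else (θ x).map s

theorem updateMap_self [DecidableEq β] (θ : β →. γ) (s : γ → β) (w : β) :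
    updateMap θ s w w = Part.some w :=
  if_pos rfl

theorem updateMap_of_ne [DecidableEq β] (θ : β →. γ) (s : γ → β) {w x : β} (hx : x ≠ w) :
    updateMap θ s w x = (θ x).map s :=
  if_neg hx

theorem comp_updateMap [DecidableEq β] {θ : β →. γ} {s : γ → β}
    (hs : ∀ y ∈ θ.ran, y ∈ θ (s y)) (w : β) : θ.comp (updateMap θ s w) = θ := by
  refine PFun.ext fun x y => ?_
  rw [comp_apply]
  by_cases hx : x = w
  · rw [hx, updateMap_self]
    refine ⟨fun hy => ?_, fun hy => Part.mem_bind_iff.2 ⟨w, Part.mem_some w, hy⟩⟩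
    obtain ⟨_, hz, hy⟩ := Part.mem_bind_iff.1 hy
    rwa [Part.mem_some_iff.1 hz] at hy
  · rw [updateMap_of_ne θ s hx]
    refine ⟨fun hy => ?_, fun hy => Part.mem_bind_iff.2 ⟨s y, Part.mem_map s hy, hs y ⟨x, hy⟩⟩⟩
    obtain ⟨_, hz, hy⟩ := Part.mem_bind_iff.1 hy
    obtain ⟨t, ht, rfl⟩ := (Part.mem_map_iff s).1 hz
    rwa [Part.mem_unique hy (hs t ⟨x, ht⟩)]

theorem image_updateMap_of_mem [DecidableEq β] (θ : β →. γ) (s : γ → β) {w : β} {R : Set β}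
    (hw : w ∈ R) :
    (updateMap θ s w).image R = insert w (s '' θ.image (R \ {w})) := by
  ext y
  simp only [mem_image, Set.mem_insert_iff, Set.mem_image]
  constructor
  · rintro ⟨x, hx, hy⟩
    by_cases hxw : x = w
    · rw [hxw, updateMap_self] at hy
      exact Or.inl (Part.mem_some_iff.1 hy)
    · rw [updateMap_of_ne θ s hxw] at hy
      obtain ⟨t, ht, rfl⟩ := (Part.mem_map_iff s).1 hy
      exact Or.inr ⟨t, ⟨x, ⟨hx, hxw⟩, ht⟩, rfl⟩
  · rintro (rfl | ⟨t, ⟨x, ⟨hx, hxw⟩, ht⟩, rfl⟩)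
    · exact ⟨y, hw, updateMap_self θ s y ▸ Part.mem_some y⟩
    · exact ⟨x, hx, updateMap_of_ne θ s hxw ▸ Part.mem_map s ht⟩

theorem exists_comp_eq_self_ncard_ran_comp_succ [Finite β] (g : α →. β) (θ : β →. γ)
    (hlt : (θ.comp g).ran.ncard < g.ran.ncard) :
    ∃ σ : β →. β, θ.comp σ = θ ∧ σ.ran.ncard ≤ θ.ran.ncard + 1 ∧
      (σ.comp g).ran.ncard = (θ.comp g).ran.ncard + 1 := by
  classical
  rw [ran_comp] at hlt
  obtain ⟨w, hw, hwθ⟩ := exists_image_diff_singleton_eq θ (hlt := hlt)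
  have hran : θ.ran = θ.image (Set.univ \ {w}) := by
    refine Set.Subset.antisymm (fun y ⟨x, hy⟩ => ?_) fun y ⟨x, _, hy⟩ => ⟨x, hy⟩
    by_cases hx : x = w
    · have hy : y ∈ θ.image (g.ran \ {w}) := hwθ ▸ ⟨x, hx ▸ hw, hy⟩
      obtain ⟨u, ⟨_, hu⟩, hy⟩ := hy
      exact ⟨u, ⟨trivial, hu⟩, hy⟩
    · exact ⟨x, ⟨trivial, hx⟩, hy⟩
  have : Nonempty β := ⟨w⟩
  choose! s hsw hs using fun y (hy : y ∈ θ.image (Set.univ \ {w})) => hy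
  rw [← hran] at hsw hs
  have hsinj : Set.InjOn s θ.ran := fun y hy y' hy' h =>
    Part.mem_unique (hs y hy) (h ▸ hs y' hy')
  have hwnot : w ∉ s '' θ.ran := fun ⟨y, hy, hyw⟩ => (hsw y hy).2 hyw
  have hsub : θ.image g.ran ⊆ θ.ran := fun y ⟨x, _, hy⟩ => ⟨x, hy⟩
  refine ⟨updateMap θ s w, comp_updateMap hs w, ?_, ?_⟩
  · rw [ran_eq_image_univ, image_updateMap_of_mem θ s (Set.mem_univ w), ← hran]
    exact (Set.ncard_insert_le _ _).trans (by gcongr; exact Set.ncard_image_le (finite_ran θ))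
  · rw [ran_comp, image_updateMap_of_mem θ s hw, hwθ,
      Set.ncard_insert_of_notMem fun h => hwnot (Set.image_mono hsub h),
      (hsinj.mono hsub).ncard_image, ran_comp]

end PFun

theorem ptrank_add_ptrank_le {n : ℕ} (f g : PTn n) :
    ptrank f + ptrank g ≤ n + ptrank (f * g) := by
  have h := PFun.ncard_ran_add_ncard_ran_le f.toPFun g.toPFun
  rwa [Nat.card_eq_fintype_card, Fintype.card_fin] at h

section Presentation

open FreeSemigroup

variable {n m i : ℕ}

theorem conGen_PTRel_of_mul_eq (a b c : PTX n m i) (h : a.1 * b.1 = c.1) :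
    conGen (PTRel n m i) (of a * of b) (of c) := by
  obtain ⟨c, hc⟩ := c
  subst h
  exact ConGen.Rel.of _ _ ⟨a.1, b.1, a.2, b.2, hc, rfl, rfl⟩

theorem conGen_PTRel_reassoc (g s t u v : PTX n m i) (hu : g.1 * s.1 = u.1)
    (hv : s.1 * t.1 = v.1) : conGen (PTRel n m i) (of g * of v) (of u * of t) := by
  have hsplit := (conGen (PTRel n m i)).mul ((conGen _).refl (of g))
    ((conGen _).symm (conGen_PTRel_of_mul_eq s t v hv))
  have hjoin :=
    (conGen (PTRel n m i)).mul (conGen_PTRel_of_mul_eq g s u hu) ((conGen _).refl (of t))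
  rw [mul_assoc] at hjoin
  exact (conGen _).trans hsplit hjoin

theorem exists_conGen_replace_left {r : ℕ} (g θ : PTX n m (r + 1)) (hθ : ptrank θ.1 < m)
    (hgθ : ptrank (g.1 * θ.1) = r) :
    ∃ a : PTX n m (r + 1), ptrank a.1 = r + 1 ∧ a.1 * θ.1 = g.1 * θ.1 ∧
      conGen (PTRel n m (r + 1)) (of g * of θ) (of a * of θ) := by
  obtain ⟨σ, hσθ, hσ, hgσ⟩ : ∃ σ : PTn n, σ * θ.1 = θ.1 ∧ ptrank σ ≤ ptrank θ.1 + 1 ∧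
      ptrank (g.1 * σ) = ptrank (g.1 * θ.1) + 1 :=
    PFun.exists_comp_eq_self_ncard_ran_comp_succ g.1.toPFun θ.1.toPFun (by
      change ptrank (g.1 * θ.1) < ptrank g.1
      have := g.2.1
      omega)
  have hσ₁ := ptrank_mul_le g.1 σ
  have hθ₁ := θ.2.1
  refine ⟨⟨g.1 * σ, by omega, by omega⟩, by dsimp only; omega, by rw [mul_assoc, hσθ], ?_⟩
  exact conGen_PTRel_reassoc g ⟨σ, by omega, by omega⟩ θ _ θ rfl hσθ

theorem exists_conGen_replace_right {r : ℕ} (g h : PTX n m (r + 1)) (hg : ptrank g.1 < m)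
    (hgh : ptrank (g.1 * h.1) = r) :
    ∃ b : PTX n m (r + 1), ptrank b.1 = r + 1 ∧ g.1 * b.1 = g.1 * h.1 ∧
      conGen (PTRel n m (r + 1)) (of g * of h) (of g * of b) := by
  obtain ⟨ι, hgι, hι, hιh⟩ : ∃ ι : PTn n, g.1 * ι = g.1 ∧ ptrank ι = ptrank g.1 + 1 ∧
      ptrank (ι * h.1) = ptrank (g.1 * h.1) + 1 :=
    PFun.exists_fix_ran_ncard_ran_comp_succ g.1.toPFun h.1.toPFun (by
      change ptrank (g.1 * h.1) < ptrank h.1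
      have := h.2.1
      omega)
  have hg₁ := g.2.1
  refine ⟨⟨ι * h.1, by omega, by omega⟩, by dsimp only; omega, by rw [← mul_assoc, hgι], ?_⟩
  exact (conGen _).symm (conGen_PTRel_reassoc g ⟨ι, by omega, by omega⟩ h g _ hgι rfl)

end Presentation

theorem stmt_18_general (n m r : ℕ) (hr : r + n + 1 ≤ 2 * m)
    (γ δ : PTn n)
    (hγ₁ : r + 1 ≤ ptrank γ) (hγ₂ : ptrank γ ≤ m)
    (hδ₁ : r + 1 ≤ ptrank δ) (hδ₂ : ptrank δ ≤ m)
    (hrank : ptrank (γ * δ) = r) :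
    ∃ α β : PTX n m (r + 1), ptrank α.val = r + 1 ∧ ptrank β.val = r + 1 ∧
      α.val * β.val = γ * δ ∧
      conGen (PTRel n m (r + 1))
        (FreeSemigroup.of (⟨γ, ⟨hγ₁, hγ₂⟩⟩ : PTX n m (r + 1)) *
          FreeSemigroup.of (⟨δ, ⟨hδ₁, hδ₂⟩⟩ : PTX n m (r + 1)))
        (FreeSemigroup.of α * FreeSemigroup.of β) := by
  have hcount := ptrank_add_ptrank_le γ δ
  rcases lt_or_ge (ptrank δ) m with hδ | hδ
  · obtain ⟨α, hα, hαδ, hγα⟩ :=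
      exists_conGen_replace_left ⟨γ, hγ₁, hγ₂⟩ ⟨δ, hδ₁, hδ₂⟩ hδ hrank
    obtain ⟨β, hβ, hαβ, hδβ⟩ :=
      exists_conGen_replace_right α ⟨δ, hδ₁, hδ₂⟩ (by omega) (hαδ ▸ hrank)
    exact ⟨α, β, hα, hβ, hαβ.trans hαδ, (conGen _).trans hγα hδβ⟩
  · obtain ⟨β, hβ, hγβ, hδβ⟩ :=
      exists_conGen_replace_right ⟨γ, hγ₁, hγ₂⟩ ⟨δ, hδ₁, hδ₂⟩ (show ptrank γ < m by omega)
        hrank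
    obtain ⟨α, hα, hαβ, hγα⟩ :=
      exists_conGen_replace_left ⟨γ, hγ₁, hγ₂⟩ β (by omega) (hγβ ▸ hrank)
    exact ⟨α, β, hα, hβ, hαβ.trans hγβ, (conGen _).trans hδβ hγα⟩

/-- In the partial transformation monoid, if `r + 1 ≤ rank γ, rank δ ≤ m` and
`rank (γδ) = r`, then there are `α, β` of rank `r + 1` with `αβ = γδ` such that
`x_γ x_δ = x_α x_β` is a consequence of the Cayley relations among elements of rank
between `r + 1` and `m` (assuming `m < n` and `r + n + 1 ≤ 2m`). -/
theorem stmt_18 (n m r : ℕ) (hm : m < n) (hr : r + n + 1 ≤ 2 * m)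
    (γ δ : PTn n)
    (hγ₁ : r + 1 ≤ ptrank γ) (hγ₂ : ptrank γ ≤ m)
    (hδ₁ : r + 1 ≤ ptrank δ) (hδ₂ : ptrank δ ≤ m)
    (hrank : ptrank (γ * δ) = r) :
    ∃ α β : PTX n m (r + 1), ptrank α.val = r + 1 ∧ ptrank β.val = r + 1 ∧
      α.val * β.val = γ * δ ∧
      conGen (PTRel n m (r + 1))
        (FreeSemigroup.of (⟨γ, ⟨hγ₁, hγ₂⟩⟩ : PTX n m (r + 1)) *
          FreeSemigroup.of (⟨δ, ⟨hδ₁, hδ₂⟩⟩ : PTX n m (r + 1)))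
        (FreeSemigroup.of α * FreeSemigroup.of β) :=
  stmt_18_general n m r hr γ δ hγ₁ hγ₂ hδ₁ hδ₂ hrank
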